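/- Let (a_n) be a sequence of positive reals tending to ∞, let {ξ^n}_{n∈ℕ} be a sequence of random Radon measures on Δ, and fix l ∈ ℕ. Assume that for every finite family P = {(s_i,t_i)}_{i=1}^h with 0 ≤ s_i < t_i < ∞, the ℝ^h-valued process {(ξ^n([0,s₁]×(t₁,∞]), …, ξ^n([0,s_h]×(t_h,∞]))}_{n∈ℕ} satisfies an LDP with speed a_n and a good rate function I_P : ℝ^h → [0,∞]. Then the ℝ^{I_l}-valued process {hist_l(ξ^n)}_{n∈ℕ} satisfies an LDP with speed a_n and a good rate function I_l : ℝ^{I_l} → [0,∞]. Moreover, if each I_P has a unique zero point, then so does I_l. -/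

import Mathlib

/-!
Each histogram cell is, by inclusion–exclusion, a fixed signed sum of the masses of at most four
quadrants `[0,s] × (t,∞]` with dyadic corners `s = i/2^(l+1) < t = j/2^(l+1)`; these masses are
finite because the quadrants are relatively compact in `Δ`. Hence `hist_l(ξⁿ) = L(Xⁿ)` for a
single finite tuple `Xⁿ` of quadrant masses and a continuous (linear) map `L`, and the contraction
principle transfers the LDP of `Xⁿ`, with the good rate function `y ↦ inf {I_P x | L x = y}`.
Since the sublevel sets of `I_P` are compact this infimum is attained, so a unique zero of `I_P`
is mapped to a unique zero.
-/

open MeasureTheory Filter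
open scoped ENNReal

namespace PersistenceDiagram

/-- The (extended) half-plane `Δ = {(s,t) ∈ [0,∞]² : s < t}` above the diagonal. -/
abbrev PD : Type := {p : ℝ≥0∞ × ℝ≥0∞ // p.1 < p.2}

/-- The quadrant `[0,s] × (t,∞] ⊆ Δ`. -/
def quad (s t : ℝ≥0∞) : Set PD := {p | p.1.1 ≤ s ∧ t < p.1.2}

/-- The index set of the rectangles constituting the histogram with fineness degree `l`:
pairs `(i,j)` with `i = 0`, `3 ≤ j ≤ l·2^(l+1)` (rectangles `[0,2^{-(l+1)}] × ((j-1)/2^{l+1}, j/2^{l+1}]`)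
or `2 ≤ i`, `i + 2 ≤ j ≤ l·2^(l+1)` (rectangles `((i-1)/2^{l+1}, i/2^{l+1}] × ((j-1)/2^{l+1}, j/2^{l+1}]`). -/
def HistIdx (l : ℕ) : Type :=
  {ij : ℕ × ℕ // (ij.1 = 0 ∧ 3 ≤ ij.2 ∧ ij.2 ≤ l * 2 ^ (l + 1)) ∨
    (2 ≤ ij.1 ∧ ij.1 + 2 ≤ ij.2 ∧ ij.2 ≤ l * 2 ^ (l + 1))}

/-- The rectangle of fineness degree `l` indexed by `(i,j)`. -/
noncomputable def histRect (l i j : ℕ) : Set PD :=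
  if i = 0 then
    {p | p.1.1 ≤ 1 / 2 ^ (l + 1) ∧
      ((j : ℝ≥0∞) - 1) / 2 ^ (l + 1) < p.1.2 ∧ p.1.2 ≤ (j : ℝ≥0∞) / 2 ^ (l + 1)}
  else
    {p | ((i : ℝ≥0∞) - 1) / 2 ^ (l + 1) < p.1.1 ∧ p.1.1 ≤ (i : ℝ≥0∞) / 2 ^ (l + 1) ∧
      ((j : ℝ≥0∞) - 1) / 2 ^ (l + 1) < p.1.2 ∧ p.1.2 ≤ (j : ℝ≥0∞) / 2 ^ (l + 1)}

/-- The histogram of a measure `ξ` on `Δ` with fineness degree `l`. -/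
noncomputable def hist (l : ℕ) (ξ : Measure PD) : HistIdx l → ℝ :=
  fun ij => (ξ (histRect l ij.1.1 ij.1.2)).toReal

/-- The (Donsker–Varadhan) large deviation principle with speed `a n` and rate function `I`. -/
def IsLDP {Ω X : Type*} [MeasurableSpace Ω] [TopologicalSpace X] (P : Measure Ω) (a : ℕ → ℝ)
    (T : ℕ → Ω → X) (I : X → ℝ≥0∞) : Prop :=
  LowerSemicontinuous I ∧
  (∀ F : Set X, IsClosed F →
    limsup (fun n => (((a n)⁻¹ : ℝ) : EReal) * ENNReal.log (P {ω | T n ω ∈ F})) atTop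
      ≤ -((⨅ x ∈ F, I x : ℝ≥0∞) : EReal)) ∧
  (∀ G : Set X, IsOpen G →
    -((⨅ x ∈ G, I x : ℝ≥0∞) : EReal)
      ≤ liminf (fun n => (((a n)⁻¹ : ℝ) : EReal) * ENNReal.log (P {ω | T n ω ∈ G})) atTop)

/-- Good rate function: lower semicontinuous with compact sublevel sets. -/
def GoodRate {X : Type*} [TopologicalSpace X] (I : X → ℝ≥0∞) : Prop :=
  LowerSemicontinuous I ∧ ∀ α : ℝ≥0∞, α ≠ ⊤ → IsCompact {x | I x ≤ α}

section Contraction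

variable {X Y : Type*}

/-- The rate function of the contraction principle. -/
noncomputable def pushRate (I : X → ℝ≥0∞) (f : X → Y) (y : Y) : ℝ≥0∞ :=
  ⨅ (x) (_ : f x = y), I x

theorem pushRate_le (I : X → ℝ≥0∞) (f : X → Y) (x : X) : pushRate I f (f x) ≤ I x :=
  iInf₂_le (f := fun x' (_ : f x' = f x) => I x') x rfl

theorem iInf_pushRate (I : X → ℝ≥0∞) (f : X → Y) (S : Set Y) :
    ⨅ y ∈ S, pushRate I f y = ⨅ x ∈ f ⁻¹' S, I x := by
  simp only [pushRate, Set.mem_preimage]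
  exact le_antisymm (le_iInf₂ fun x hx => iInf₂_le_of_le (f x) hx (pushRate_le I f x))
    (le_iInf₂ fun y hy => le_iInf₂ fun x hx => iInf₂_le x (hx ▸ hy))

variable [TopologicalSpace X] [TopologicalSpace Y]

theorem GoodRate.exists_eq_pushRate [T1Space Y] {I : X → ℝ≥0∞} (hI : GoodRate I) {f : X → Y}
    (hf : Continuous f) {y : Y} (hy : pushRate I f y ≠ ⊤) :
    ∃ x, f x = y ∧ I x = pushRate I f y := by
  obtain ⟨x₁, hx₁, hx₁I⟩ : ∃ x, f x = y ∧ I x < pushRate I f y + 1 := by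
    simpa only [pushRate, iInf_lt_iff, exists_prop] using ENNReal.lt_add_right hy one_ne_zero
  set K := f ⁻¹' {y} ∩ {x | I x ≤ pushRate I f y + 1}
  have hK : IsCompact K :=
    (hI.2 _ (by finiteness)).of_isClosed_subset
      ((isClosed_singleton.preimage hf).inter (hI.1.isClosed_preimage _)) Set.inter_subset_right
  obtain ⟨x₀, ⟨hx₀, -⟩, hmin⟩ :=
    LowerSemicontinuousOn.exists_isMinOn (s := K) ⟨x₁, hx₁, hx₁I.le⟩ hK
      (hI.1.lowerSemicontinuousOn K)
  refine ⟨x₀, hx₀, le_antisymm (le_iInf₂ fun x hx => ?_) (hx₀ ▸ pushRate_le I f x₀)⟩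
  by_cases hxK : I x ≤ pushRate I f y + 1
  · exact hmin ⟨hx, hxK⟩
  · exact (hmin ⟨hx₁, hx₁I.le⟩).trans (hx₁I.le.trans (not_le.1 hxK).le)

theorem GoodRate.setOf_pushRate_le [T1Space Y] {I : X → ℝ≥0∞} (hI : GoodRate I) {f : X → Y}
    (hf : Continuous f) {α : ℝ≥0∞} (hα : α ≠ ⊤) :
    {y | pushRate I f y ≤ α} = f '' {x | I x ≤ α} := by
  ext y
  refine ⟨fun hy => ?_, ?_⟩
  · obtain ⟨x, rfl, hx⟩ := hI.exists_eq_pushRate hf (ne_top_of_le_ne_top hα hy)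
    exact ⟨x, hx.trans_le hy, rfl⟩
  · rintro ⟨x, hx, rfl⟩
    exact (pushRate_le I f x).trans hx

theorem goodRate_pushRate [T2Space Y] {I : X → ℝ≥0∞} (hI : GoodRate I) {f : X → Y}
    (hf : Continuous f) : GoodRate (pushRate I f) := by
  have hcompact : ∀ α ≠ ⊤, IsCompact {y | pushRate I f y ≤ α} := fun α hα => by
    rw [hI.setOf_pushRate_le hf hα]
    exact (hI.2 α hα).image hf
  refine ⟨lowerSemicontinuous_iff_isClosed_preimage.2 fun α => ?_, hcompact⟩
  rcases eq_or_ne α ⊤ with rfl | hα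
  · simp
  · exact (hcompact α hα).isClosed

theorem GoodRate.existsUnique_pushRate_eq_zero [T1Space Y] {I : X → ℝ≥0∞} (hI : GoodRate I)
    {f : X → Y} (hf : Continuous f) (h : ∃! x, I x = 0) : ∃! y, pushRate I f y = 0 := by
  obtain ⟨x₀, hx₀, huniq⟩ := h
  refine ⟨f x₀, nonpos_iff_eq_zero.1 (hx₀ ▸ pushRate_le I f x₀), fun y hy => ?_⟩
  obtain ⟨x, hx, rfl⟩ : y ∈ f '' {x | I x ≤ 0} :=
    hI.setOf_pushRate_le hf ENNReal.zero_ne_top ▸ hy.le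
  rw [huniq x (nonpos_iff_eq_zero.1 hx)]

theorem IsLDP.comp [T2Space Y] {Ω : Type*} [MeasurableSpace Ω] {P : Measure Ω} {a : ℕ → ℝ}
    {T : ℕ → Ω → X} {I : X → ℝ≥0∞} (hT : IsLDP P a T I) (hI : GoodRate I) {f : X → Y}
    (hf : Continuous f) : IsLDP P a (fun n ω => f (T n ω)) (pushRate I f) := by
  refine ⟨(goodRate_pushRate hI hf).1, fun F hF => ?_, fun G hG => ?_⟩
  · rw [iInf_pushRate]
    exact hT.2.1 (f ⁻¹' F) (hF.preimage hf)
  · rw [iInf_pushRate]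
    exact hT.2.2 (f ⁻¹' G) (hG.preimage hf)

end Contraction

section Quadrants

theorem quad_subset_quad {s s' t t' : ℝ≥0∞} (hs : s ≤ s') (ht : t' ≤ t) :
    quad s t ⊆ quad s' t' :=
  fun _ hp => ⟨hp.1.trans hs, ht.trans_lt hp.2⟩

theorem measurableSet_quad (s t : ℝ≥0∞) : MeasurableSet (quad s t) :=
  (measurableSet_le (measurable_fst.comp measurable_subtype_coe) measurable_const).inter
    (measurableSet_lt measurable_const (measurable_snd.comp measurable_subtype_coe))

theorem measure_quad_lt_top (μ : Measure PD) [IsFiniteMeasureOnCompacts μ] {s t : ℝ≥0∞}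
    (hst : s < t) : μ (quad s t) < ⊤ := by
  have hK : IsCompact (Subtype.val ⁻¹' (Set.Iic s ×ˢ Set.Ici t) : Set PD) := by
    refine Topology.IsInducing.subtypeVal.isCompact_preimage'
      (isClosed_Iic.prod isClosed_Ici).isCompact fun p hp => ?_
    exact ⟨⟨p, hp.1.trans_lt (hst.trans_le hp.2)⟩, rfl⟩
  have hsub : quad s t ⊆ Subtype.val ⁻¹' (Set.Iic s ×ˢ Set.Ici t) := fun _ hp => ⟨hp.1, hp.2.le⟩
  exact (measure_mono hsub).trans_lt hK.measure_lt_top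

variable (μ : Measure PD) [IsFiniteMeasureOnCompacts μ] {s s' t t' : ℝ≥0∞}

theorem measureReal_quad_sdiff_quad (hst : s < t) (ht : t ≤ t') :
    μ.real (quad s t \ quad s t') = μ.real (quad s t) - μ.real (quad s t') :=
  measureReal_sdiff (quad_subset_quad le_rfl ht) (measurableSet_quad s t')
    (measure_quad_lt_top μ hst).ne

theorem measureReal_quad_sdiff_quad_sdiff (hs : s' ≤ s) (hst : s < t) (ht : t ≤ t') :
    μ.real ((quad s t \ quad s t') \ (quad s' t \ quad s' t')) =
      (μ.real (quad s t) - μ.real (quad s t')) - (μ.real (quad s' t) - μ.real (quad s' t')) := by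
  have hsub : quad s' t \ quad s' t' ⊆ quad s t \ quad s t' :=
    fun p ⟨⟨h₁, h₂⟩, h₃⟩ => ⟨⟨h₁.trans hs, h₂⟩, fun h => h₃ ⟨h₁, h.2⟩⟩
  rw [measureReal_sdiff hsub ((measurableSet_quad _ _).diff (measurableSet_quad _ _))
      (measure_ne_top_of_subset Set.sdiff_subset (measure_quad_lt_top μ hst).ne),
    measureReal_quad_sdiff_quad μ hst ht, measureReal_quad_sdiff_quad μ (hs.trans_lt hst) ht]

end Quadrants

section Histogram

noncomputable def dyadic (l i : ℕ) : ℝ≥0∞ := i / 2 ^ (l + 1)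

theorem dyadic_strictMono (l : ℕ) : StrictMono (dyadic l) :=
  fun _ _ hij => ENNReal.div_lt_div_right (by positivity) (by finiteness) (by exact_mod_cast hij)

theorem dyadic_ne_top (l i : ℕ) : dyadic l i ≠ ⊤ :=
  ENNReal.div_ne_top (ENNReal.natCast_ne_top i) (by positivity)

theorem histRect_zero (l j : ℕ) :
    histRect l 0 j = quad (dyadic l 1) (dyadic l (j - 1)) \ quad (dyadic l 1) (dyadic l j) := by
  ext p
  simp only [histRect, quad, dyadic, ENNReal.natCast_sub, Nat.cast_one, if_true, Set.mem_sdiff,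
    Set.mem_ofPred_eq]
  grind

theorem histRect_of_ne_zero {l i : ℕ} (hi : i ≠ 0) (j : ℕ) :
    histRect l i j =
      (quad (dyadic l i) (dyadic l (j - 1)) \ quad (dyadic l i) (dyadic l j)) \
        (quad (dyadic l (i - 1)) (dyadic l (j - 1)) \ quad (dyadic l (i - 1)) (dyadic l j)) := by
  ext p
  simp only [histRect, quad, dyadic, ENNReal.natCast_sub, Nat.cast_one, if_neg hi, Set.mem_sdiff,
    Set.mem_ofPred_eq]
  grind

/-- Inclusion–exclusion: the histogram read off the quadrant masses `Q i j` at dyadic corners. -/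
noncomputable def histOfGrid (l : ℕ) (Q : ℕ → ℕ → ℝ) (c : HistIdx l) : ℝ :=
  if c.1.1 = 0 then Q 1 (c.1.2 - 1) - Q 1 c.1.2
  else (Q c.1.1 (c.1.2 - 1) - Q c.1.1 c.1.2) - (Q (c.1.1 - 1) (c.1.2 - 1) - Q (c.1.1 - 1) c.1.2)

theorem continuous_histOfGrid (l : ℕ) : Continuous (histOfGrid l) :=
  continuous_pi fun c => by unfold histOfGrid; split_ifs <;> fun_prop

theorem hist_eq_histOfGrid {l : ℕ} (μ : Measure PD) [IsFiniteMeasureOnCompacts μ]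
    {Q : ℕ → ℕ → ℝ} (hQ : ∀ i j, i < j → j ≤ l * 2 ^ (l + 1) →
      Q i j = μ.real (quad (dyadic l i) (dyadic l j))) :
    hist l μ = histOfGrid l Q := by
  have hd := dyadic_strictMono l
  funext ⟨⟨i, j⟩, hij⟩
  change μ.real (histRect l i j) = histOfGrid l Q _
  rcases id hij with ⟨hi, hj, hjM⟩ | ⟨hi, hij, hjM⟩
  · obtain rfl : i = 0 := hi
    simp only [histOfGrid, if_true]
    rw [histRect_zero, measureReal_quad_sdiff_quad μ (hd (by omega)) (hd.monotone (by omega)),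
      hQ 1 (j - 1) (by omega) (by omega), hQ 1 j (by omega) hjM]
  · simp only [histOfGrid, if_neg (show i ≠ 0 by omega)]
    rw [histRect_of_ne_zero (by omega),
      measureReal_quad_sdiff_quad_sdiff μ (hd.monotone (by omega)) (hd (by omega))
        (hd.monotone (by omega)),
      hQ i (j - 1) (by omega) (by omega), hQ i j (by omega) hjM,
      hQ (i - 1) (j - 1) (by omega) (by omega), hQ (i - 1) j (by omega) hjM]

end Histogram

section Grid

abbrev gridPairs (M : ℕ) : Type := {p : ℕ × ℕ // p.1 < p.2 ∧ p.2 ≤ M}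

instance (M : ℕ) : Finite (gridPairs M) :=
  Set.Finite.to_subtype (((Set.finite_Iic M).prod (Set.finite_Iic M)).subset
    fun _ hp => ⟨(hp.1.trans_le hp.2).le, hp.2⟩)

noncomputable def extendGrid {M : ℕ} (x : gridPairs M → ℝ) (i j : ℕ) : ℝ :=
  if h : i < j ∧ j ≤ M then x ⟨(i, j), h⟩ else 0

theorem extendGrid_of_lt {M : ℕ} (x : gridPairs M → ℝ) {i j : ℕ} (hij : i < j) (hj : j ≤ M) :
    extendGrid x i j = x ⟨(i, j), hij, hj⟩ :=
  dif_pos ⟨hij, hj⟩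

theorem continuous_extendGrid (M : ℕ) : Continuous (extendGrid (M := M)) :=
  continuous_pi fun i => continuous_pi fun j => by unfold extendGrid; split_ifs <;> fun_prop

end Grid

theorem ldp_histogram_general {Ω : Type*} [MeasurableSpace Ω]
    (P : Measure Ω)
    (a : ℕ → ℝ)
    (l : ℕ)
    (ξ : ℕ → Ω → Measure PD)
    (hRadon : ∀ n ω (K : Set PD), IsCompact K → ξ n ω K < ⊤)
    -- LDPs with good rate functions for all finite tuples of quadrant masses
    (IP : (h : ℕ) → (Fin h → ℝ≥0∞) → (Fin h → ℝ≥0∞) → ((Fin h → ℝ) → ℝ≥0∞))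
    (hIP : ∀ (h : ℕ) (s t : Fin h → ℝ≥0∞), (∀ i, s i < t i) → (∀ i, t i ≠ ⊤) →
      GoodRate (IP h s t) ∧
        IsLDP P a (fun n ω i => (ξ n ω (quad (s i) (t i))).toReal) (IP h s t)) :
    ∃ Il : (HistIdx l → ℝ) → ℝ≥0∞, GoodRate Il ∧
      IsLDP P a (fun n ω => hist l (ξ n ω)) Il ∧
      ((∀ (h : ℕ) (s t : Fin h → ℝ≥0∞) (hs : ∀ i, s i < t i) (ht : ∀ i, t i ≠ ⊤),
          ∃! x, IP h s t x = 0) →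
        ∃! H : HistIdx l → ℝ, Il H = 0) := by
  obtain ⟨h, ⟨e⟩⟩ := Finite.exists_equiv_fin (gridPairs (l * 2 ^ (l + 1)))
  let s : Fin h → ℝ≥0∞ := fun k => dyadic l (e.symm k).1.1
  let t : Fin h → ℝ≥0∞ := fun k => dyadic l (e.symm k).1.2
  have hst : ∀ k, s k < t k := fun k => dyadic_strictMono l (e.symm k).2.1
  have ht : ∀ k, t k ≠ ⊤ := fun k => dyadic_ne_top l _
  obtain ⟨hgood, hldp⟩ := hIP h s t hst ht
  let F : (Fin h → ℝ) → HistIdx l → ℝ := fun x => histOfGrid l (extendGrid (x ∘ e))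
  have hF : Continuous F :=
    (continuous_histOfGrid l).comp ((continuous_extendGrid _).comp (by fun_prop))
  have hhist : (fun n ω => hist l (ξ n ω)) =
      fun n ω => F fun k => (ξ n ω (quad (s k) (t k))).toReal := by
    funext n ω
    have : IsFiniteMeasureOnCompacts (ξ n ω) := ⟨hRadon n ω⟩
    refine hist_eq_histOfGrid (ξ n ω) fun i j hij hj => ?_
    simp only [extendGrid_of_lt _ hij hj, Function.comp_apply, s, t, Equiv.symm_apply_apply]
    rfl
  exact ⟨pushRate (IP h s t) F, goodRate_pushRate hgood hF, hhist ▸ hldp.comp hgood hF,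
    fun huniq => hgood.existsUnique_pushRate_eq_zero hF (huniq h s t hst ht)⟩

/-- LDP for the histograms, lifted from LDPs for the tuples of quadrant masses. -/
theorem ldp_histogram {Ω : Type*} [MeasurableSpace Ω]
    (P : Measure Ω) [IsProbabilityMeasure P]
    (a : ℕ → ℝ) (hapos : ∀ n, 0 < a n) (hatop : Tendsto a atTop atTop)
    (l : ℕ) (hl : 1 ≤ l)
    (ξ : ℕ → Ω → Measure PD)
    (hmeas : ∀ n (A : Set PD), MeasurableSet A → Measurable fun ω => ξ n ω A)
    (hRadon : ∀ n ω (K : Set PD), IsCompact K → ξ n ω K < ⊤)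
    -- LDPs with good rate functions for all finite tuples of quadrant masses
    (IP : (h : ℕ) → (Fin h → ℝ≥0∞) → (Fin h → ℝ≥0∞) → ((Fin h → ℝ) → ℝ≥0∞))
    (hIP : ∀ (h : ℕ) (s t : Fin h → ℝ≥0∞), (∀ i, s i < t i) → (∀ i, t i ≠ ⊤) →
      GoodRate (IP h s t) ∧
        IsLDP P a (fun n ω i => (ξ n ω (quad (s i) (t i))).toReal) (IP h s t)) :
    ∃ Il : (HistIdx l → ℝ) → ℝ≥0∞, GoodRate Il ∧
      IsLDP P a (fun n ω => hist l (ξ n ω)) Il ∧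
      ((∀ (h : ℕ) (s t : Fin h → ℝ≥0∞) (hs : ∀ i, s i < t i) (ht : ∀ i, t i ≠ ⊤),
          ∃! x, IP h s t x = 0) →
        ∃! H : HistIdx l → ℝ, Il H = 0) :=
  ldp_histogram_general P a l ξ hRadon IP hIP

end PersistenceDiagram
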